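/- Let D be an integral domain such that the v-operation distributes over finite intersections of nonzero finitely generated fractional ideals, i.e., (F₁ ∩ F₂)^v = F₁^v ∩ F₂^v for all nonzero finitely generated fractional ideals F₁, F₂. Then for all nonzero finitely generated fractional ideals F, G of D one has ((F :_D G))^v = (F^v :_D G^v), where (A :_D B) := (A : B) ∩ D. -/

import Mathlib

/-!
`(F^v :_D G^v)` is an intersection of divisorial ideals, hence divisorial, and it contains
`(F :_D G)`; this gives `⊆`.

For `⊇`, take `z ≠ 0` in `(F^v :_D G^v)`, so that `zG ⊆ F^v`. For `u ∈ F^v`, distributivity gives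
`(u⁻¹F ∩ D)^v = u⁻¹F^v ∩ D = D`. Integral ideals with `v`-closure `D` are closed under finite
intersections, since already their product has `v`-closure `D`. Running over generators of the
finitely generated `zG` yields an integral `Y` with `Y^v = D` and `Y·zG ⊆ F`, so `zY ⊆ (F :_D G)`
and `z ∈ z·Y^v = (zY)^v ⊆ (F :_D G)^v`.
-/

open FractionalIdeal

variable {D K : Type*} [CommRing D] [IsDomain D] [Field K] [Algebra D K] [IsFractionRing D K]

/-- The `v`-operation: `A ↦ (A⁻¹)⁻¹`, where `A⁻¹ = (D : A) = 1 / A`. -/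
noncomputable def vop (A : FractionalIdeal (nonZeroDivisors D) K) :
    FractionalIdeal (nonZeroDivisors D) K := 1 / (1 / A)

/-- `A` is `v`-invertible if `(A·A⁻¹)^v = D`. -/
noncomputable def IsVInvertible (A : FractionalIdeal (nonZeroDivisors D) K) : Prop :=
  vop (A * (1 / A)) = 1

open scoped nonZeroDivisors

namespace FractionalIdeal

instance : NoZeroDivisors (FractionalIdeal D⁰ K) where
  eq_zero_or_eq_zero_of_mul_eq_zero {I J} h :=
    ((Submodule.mul_eq_bot (R := D) (A := K)).mp (by rw [← coe_mul, h, coe_zero])).imp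
      coeToSubmodule_eq_bot.mp coeToSubmodule_eq_bot.mp

protected theorem inv_ne_zero {A : FractionalIdeal D⁰ K} (hA : A ≠ 0) : A⁻¹ ≠ 0 := by
  intro h
  have hden := den_mem_inv hA
  rw [h, mem_zero_iff] at hden
  exact IsFractionRing.to_map_ne_zero_of_mem_nonZeroDivisors A.den.2 hden

theorem div_mul_eq_div_div (I : FractionalIdeal D⁰ K) {J J' : FractionalIdeal D⁰ K}
    (hJ : J ≠ 0) (hJ' : J' ≠ 0) : I / (J * J') = I / J / J' :=
  eq_of_forall_le_iff fun X => by
    rw [le_div_iff_mul_le (mul_ne_zero hJ hJ'), le_div_iff_mul_le hJ', le_div_iff_mul_le hJ,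
      mul_right_comm, mul_assoc]

theorem le_inv_inv (A : FractionalIdeal D⁰ K) : A ≤ A⁻¹⁻¹ := by
  rcases eq_or_ne A 0 with rfl | hA
  · exact zero_le _
  · rw [show A⁻¹⁻¹ = 1 / A⁻¹ from rfl, le_div_iff_mul_le (FractionalIdeal.inv_ne_zero hA)]
    exact mul_one_div_le_one

theorem inv_anti_mono' {A B : FractionalIdeal D⁰ K} (hA : A ≠ 0) (h : A ≤ B) : B⁻¹ ≤ A⁻¹ :=
  inv_anti_mono hA (ne_bot_of_le_ne_bot hA h) h

theorem inv_inv_inv (A : FractionalIdeal D⁰ K) : A⁻¹⁻¹⁻¹ = A⁻¹ := by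
  rcases eq_or_ne A 0 with rfl | hA
  · simp only [inv_zero']
  · exact le_antisymm (inv_anti_mono' hA (le_inv_inv A)) (le_inv_inv A⁻¹)

theorem inv_spanSingleton_mul {z : K} (hz : z ≠ 0) (A : FractionalIdeal D⁰ K) :
    (spanSingleton D⁰ z * A)⁻¹ = spanSingleton D⁰ z⁻¹ * A⁻¹ := by
  rcases eq_or_ne A 0 with rfl | hA
  · simp only [mul_zero, inv_zero']
  · rw [inv_eq, mul_comm, div_mul_eq_div_div _ hA (spanSingleton_ne_zero_iff.mpr hz),
      div_spanSingleton, inv_eq]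

end FractionalIdeal

section VOperation

variable {A B : FractionalIdeal D⁰ K}

theorem vop_eq_inv_inv (A : FractionalIdeal D⁰ K) : vop A = A⁻¹⁻¹ := rfl

theorem le_vop (A : FractionalIdeal D⁰ K) : A ≤ vop A := le_inv_inv A

theorem vop_ne_zero (hA : A ≠ 0) : vop A ≠ 0 := ne_bot_of_le_ne_bot hA (le_vop A)

theorem vop_zero : vop (0 : FractionalIdeal D⁰ K) = 0 := by
  simp only [vop_eq_inv_inv, inv_zero']

theorem vop_one : vop (1 : FractionalIdeal D⁰ K) = 1 := by
  simp only [vop_eq_inv_inv, inv_one]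

theorem vop_mono (h : A ≤ B) : vop A ≤ vop B := by
  rcases eq_or_ne A 0 with rfl | hA
  · rw [vop_zero]
    exact FractionalIdeal.zero_le _
  · exact inv_anti_mono' (FractionalIdeal.inv_ne_zero (ne_bot_of_le_ne_bot hA h))
      (inv_anti_mono' hA h)

theorem vop_vop (A : FractionalIdeal D⁰ K) : vop (vop A) = vop A := by
  rw [vop_eq_inv_inv, vop_eq_inv_inv, inv_inv_inv]

theorem vop_eq_one_iff : vop A = 1 ↔ A⁻¹ = 1 := by
  constructor
  · intro h
    rw [← inv_inv_inv A]
    exact (congrArg (·⁻¹) h).trans inv_one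
  · intro h
    rw [vop_eq_inv_inv, h, inv_one]

theorem vop_spanSingleton_mul {z : K} (hz : z ≠ 0) (A : FractionalIdeal D⁰ K) :
    vop (spanSingleton D⁰ z * A) = spanSingleton D⁰ z * vop A := by
  rw [vop_eq_inv_inv, inv_spanSingleton_mul hz, inv_spanSingleton_mul (inv_ne_zero hz), inv_inv,
    vop_eq_inv_inv]

theorem spanSingleton_mul_vop_le {z : K} (h : spanSingleton D⁰ z * A ≤ B) :
    spanSingleton D⁰ z * vop A ≤ vop B := by
  rcases eq_or_ne z 0 with rfl | hz
  · simp only [spanSingleton_zero, zero_mul, FractionalIdeal.zero_le]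
  · exact (vop_spanSingleton_mul hz A).symm.trans_le (vop_mono h)

theorem div_le_vop_div_vop (A B : FractionalIdeal D⁰ K) : A / B ≤ vop A / vop B := by
  rcases eq_or_ne B 0 with rfl | hB
  · simp only [FractionalIdeal.div_zero, FractionalIdeal.zero_le]
  intro x hx
  rw [← spanSingleton_le_iff_mem, le_div_iff_mul_le hB] at hx
  rw [← spanSingleton_le_iff_mem, le_div_iff_mul_le (vop_ne_zero hB)]
  exact spanSingleton_mul_vop_le hx

theorem vop_div_le (A B : FractionalIdeal D⁰ K) : vop (A / B) ≤ vop A / B := by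
  rcases eq_or_ne B 0 with rfl | hB
  · simp only [FractionalIdeal.div_zero, vop_zero, le_refl]
  rw [le_div_iff_mul_le hB, mul_comm]
  refine mul_le.mpr fun b hb x hx => ?_
  have hbAB : spanSingleton D⁰ b * (A / B) ≤ A := by
    rw [mul_comm]
    exact (mul_le_mul_right (spanSingleton_le_iff_mem.mpr hb) _).trans
      ((le_div_iff_mul_le hB).mp le_rfl)
  exact spanSingleton_mul_vop_le hbAB (mem_singleton_mul.mpr ⟨x, hx, rfl⟩)

theorem vop_inf_eq_one {X Y : FractionalIdeal D⁰ K} (hX1 : X ≤ 1) (hY1 : Y ≤ 1)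
    (hX : vop X = 1) (hY : vop Y = 1) : vop (X ⊓ Y) = 1 := by
  rw [vop_eq_one_iff] at hX hY ⊢
  have hX0 : X ≠ 0 := by rintro rfl; rw [inv_zero'] at hX; exact zero_ne_one hX
  have hY0 : Y ≠ 0 := by rintro rfl; rw [inv_zero'] at hY; exact zero_ne_one hY
  have hXY : (X * Y)⁻¹ = 1 := by
    rw [inv_eq, div_mul_eq_div_div _ hX0 hY0, ← inv_eq, hX, ← inv_eq, hY]
  have hXY0 : X * Y ≠ 0 := mul_ne_zero hX0 hY0
  have hmul_le : X * Y ≤ X ⊓ Y :=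
    le_inf (mul_le_of_le_one_right' hY1) (mul_le_of_le_one_left' hX1)
  apply le_antisymm
  · exact hXY ▸ inv_anti_mono' hXY0 hmul_le
  · rw [inv_eq, le_div_iff_mul_le (ne_bot_of_le_ne_bot hXY0 hmul_le), one_mul]
    exact inf_le_left.trans hX1

theorem vop_div_inf_one_le (F G : FractionalIdeal D⁰ K) :
    vop ((F / G) ⊓ 1) ≤ (vop F / vop G) ⊓ 1 :=
  calc vop ((F / G) ⊓ 1)
      ≤ vop ((vop F / vop G) ⊓ 1) := vop_mono (inf_le_inf_right 1 (div_le_vop_div_vop F G))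
    _ ≤ vop (vop F / vop G) ⊓ vop 1 := le_inf (vop_mono inf_le_left) (vop_mono inf_le_right)
    _ ≤ (vop F / vop G) ⊓ 1 := by
      rw [vop_one]
      exact inf_le_inf_right 1 ((vop_div_le _ _).trans_eq (by rw [vop_vop]))

end VOperation

section Distributive

variable {F : FractionalIdeal D⁰ K}
  (hdist : ∀ A : FractionalIdeal D⁰ K, A ≠ 0 → (A : Submodule D K).FG → vop (A ⊓ 1) = vop A ⊓ 1)
  (hF : F ≠ 0) (hFfg : (F : Submodule D K).FG)
include hdist hF hFfg

theorem exists_vop_eq_one_mul_spanSingleton_le {u : K} (hu : u ∈ vop F) :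
    ∃ Y : FractionalIdeal D⁰ K, Y ≤ 1 ∧ vop Y = 1 ∧ Y * spanSingleton D⁰ u ≤ F := by
  rcases eq_or_ne u 0 with rfl | hu0
  · refine ⟨1, le_rfl, vop_one, ?_⟩
    simp only [spanSingleton_zero, mul_zero, FractionalIdeal.zero_le]
  set A := spanSingleton D⁰ u⁻¹ * F
  have hA0 : A ≠ 0 := mul_ne_zero (spanSingleton_ne_zero_iff.mpr (inv_ne_zero hu0)) hF
  have hAfg : (A : Submodule D K).FG := by
    rw [coe_mul, coe_spanSingleton]
    exact (Submodule.fg_span_singleton _).mul hFfg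
  have hinv : spanSingleton D⁰ u⁻¹ * spanSingleton D⁰ u = 1 := by
    rw [spanSingleton_mul_spanSingleton, inv_mul_cancel₀ hu0, spanSingleton_one]
  refine ⟨A ⊓ 1, inf_le_right, ?_, ?_⟩
  · have h1 : 1 ≤ vop A := by
      rw [vop_spanSingleton_mul (inv_ne_zero hu0), ← hinv]
      exact mul_le_mul_right (spanSingleton_le_iff_mem.mpr hu) _
    rw [hdist A hA0 hAfg, inf_eq_right.mpr h1]
  · calc (A ⊓ 1) * spanSingleton D⁰ u ≤ A * spanSingleton D⁰ u := mul_le_mul_left inf_le_left _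
      _ = F := by rw [mul_comm, ← mul_assoc, mul_comm _ (spanSingleton D⁰ u⁻¹), hinv, one_mul]

theorem exists_vop_eq_one_mul_le_of_le_vop {G : Submodule D K} (hG : G.FG)
    (hGF : G ≤ vop F) :
    ∃ Y : FractionalIdeal D⁰ K, Y ≤ 1 ∧ vop Y = 1 ∧ (Y : Submodule D K) * G ≤ F := by
  induction G, hG using Submodule.fg_induction with
  | singleton u =>
    obtain ⟨Y, hY1, hYv, hYu⟩ := exists_vop_eq_one_mul_spanSingleton_le hdist hF hFfg
      (hGF (Submodule.mem_span_singleton_self u))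
    exact ⟨Y, hY1, hYv, by rwa [← coe_spanSingleton D⁰, ← coe_mul, coe_le_coe]⟩
  | sup G₁ G₂ _ _ ih₁ ih₂ =>
    obtain ⟨Y₁, hY₁1, hY₁v, hY₁G⟩ := ih₁ (le_sup_left.trans hGF)
    obtain ⟨Y₂, hY₂1, hY₂v, hY₂G⟩ := ih₂ (le_sup_right.trans hGF)
    refine ⟨Y₁ ⊓ Y₂, inf_le_left.trans hY₁1, vop_inf_eq_one hY₁1 hY₂1 hY₁v hY₂v, ?_⟩
    rw [Submodule.mul_sup]
    exact sup_le ((mul_le_mul_left (coe_le_coe.mpr inf_le_left) _).trans hY₁G)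
      ((mul_le_mul_left (coe_le_coe.mpr inf_le_right) _).trans hY₂G)

theorem div_vop_inf_one_le_vop {G : FractionalIdeal D⁰ K} (hG : G ≠ 0)
    (hGfg : (G : Submodule D K).FG) :
    (vop F / vop G) ⊓ 1 ≤ vop ((F / G) ⊓ 1) := by
  intro z hz
  obtain ⟨hzF, hz1⟩ := le_inf_iff.mp (spanSingleton_le_iff_mem.mpr hz)
  rcases eq_or_ne z 0 with rfl | hz0
  · exact zero_mem _
  set zG := spanSingleton D⁰ z * G
  have hzGfg : (zG : Submodule D K).FG := by
    rw [coe_mul, coe_spanSingleton]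
    exact (Submodule.fg_span_singleton z).mul hGfg
  have hzGF : zG ≤ vop F :=
    (mul_le_mul_right (le_vop G) _).trans ((le_div_iff_mul_le (vop_ne_zero hG)).mp hzF)
  obtain ⟨Y, hY1, hYv, hYzG⟩ :=
    exists_vop_eq_one_mul_le_of_le_vop hdist hF hFfg hzGfg (coe_le_coe.mpr hzGF)
  rw [← coe_mul, coe_le_coe] at hYzG
  have hzY : spanSingleton D⁰ z * Y ≤ (F / G) ⊓ 1 := by
    refine le_inf ?_ (mul_le_one' hz1 hY1)
    rw [le_div_iff_mul_le hG, mul_right_comm, mul_comm]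
    exact hYzG
  rw [← spanSingleton_le_iff_mem]
  calc spanSingleton D⁰ z = spanSingleton D⁰ z * vop Y := by rw [hYv, mul_one]
    _ ≤ vop ((F / G) ⊓ 1) := spanSingleton_mul_vop_le hzY

end Distributive

/-- If the `v`-operation distributes over finite intersections of nonzero f.g. fractional
ideals, then `((F :_D G))^v = (F^v :_D G^v)` for all nonzero f.g. `F, G`. -/
theorem v_colon_of_v_distributes
    (hdist : ∀ F G : FractionalIdeal (nonZeroDivisors D) K, F ≠ 0 → G ≠ 0 →
      (F : Submodule D K).FG → (G : Submodule D K).FG → vop (F ⊓ G) = vop F ⊓ vop G) :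
    ∀ F G : FractionalIdeal (nonZeroDivisors D) K, F ≠ 0 → G ≠ 0 →
      (F : Submodule D K).FG → (G : Submodule D K).FG →
      vop ((F / G) ⊓ 1) = (vop F / vop G) ⊓ 1 := by
  intro F G hF hG hFfg hGfg
  have hdist_one : ∀ A : FractionalIdeal D⁰ K, A ≠ 0 → (A : Submodule D K).FG →
      vop (A ⊓ 1) = vop A ⊓ 1 := fun A hA hAfg => by
    simpa only [vop_one] using hdist A 1 hA one_ne_zero hAfg (fg_of_isUnit 1 isUnit_one)
  exact le_antisymm (vop_div_inf_one_le F G) (div_vop_inf_one_le_vop hdist_one hF hFfg hG hGfg)
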